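/- arXiv:1206.3591 — 2 statements merged into one kernel-verified Lean document; each statement's English description precedes it below -/
import Mathlib

section
/- The total number of partitions of the vertex set of the cycle C_n (n ≥ 3) into non-empty independent sets equals Σ_{i≥0} (-1)^i B_{n-1-i}, where B_m is the m-th Bell number. -/
open Finset SimpleGraph Polynomial

/-- Stirling numbers of the second kind. -/
def stirling2 : ℕ → ℕ → ℕ
  | 0, 0 => 1
  | 0, _ + 1 => 0
  | _ + 1, 0 => 0
  | n + 1, k + 1 => (k + 1) * stirling2 n (k + 1) + stirling2 n k

/-- Bell numbers. -/
def bell (n : ℕ) : ℕ := ∑ k ∈ Finset.range (n + 1), stirling2 n k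

/-- `graphStirling G k` is the number of partitions of the vertex set of `G`
into exactly `k` non-empty independent sets. -/
noncomputable def graphStirling {V : Type} [Fintype V] [DecidableEq V] (G : SimpleGraph V) (k : ℕ) : ℕ :=
  Nat.card {P : Finpartition (Finset.univ : Finset V) //
    P.parts.card = k ∧ ∀ p ∈ P.parts, ∀ u ∈ p, ∀ v ∈ p, ¬ G.Adj u v}

/-- The number of proper colorings of `G` with `x` colors
(the chromatic polynomial evaluated at `x`). -/
noncomputable def chromaticCount {V : Type} [Fintype V] (G : SimpleGraph V) (x : ℕ) : ℕ :=
  Nat.card {f : V → Fin x // ∀ u v, G.Adj u v → f u ≠ f v}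

/-!
Count the proper colourings of `C_n` with `x` colours in two ways. Grouping a colouring by its
colour classes, which form a partition into independent sets, gives `∑ₖ S(C_n, k) x^(k)` with
falling factorials `x^(k)`. Colouring the vertices in order gives `P(C_{m+1}) + P(C_m) = x (x-1)^m`,
whence `P(C_n) = ∑_{i < n-1} (-1)^i x (x-1)^(n-1-i)`, and `x (x-1)^m = ∑ₖ S(m, k) x^(k+1)`.
The falling factorials are linearly independent, so `S(C_n, k+1) = ∑ᵢ (-1)^i S(n-1-i, k)`;
summing over `k` turns the Stirling numbers into Bell numbers.
-/

theorem stirling2_eq_stirlingSecond : stirling2 = Nat.stirlingSecond := by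
  funext n k
  induction n generalizing k with
  | zero => cases k <;> rfl
  | succ n ih => cases k <;> simp [stirling2, Nat.stirlingSecond_succ_succ, ih]

namespace Nat

theorem mul_descFactorial_eq_descFactorial_succ_add (x k : ℕ) :
    x * x.descFactorial k = x.descFactorial (k + 1) + k * x.descFactorial k := by
  rcases lt_or_ge x k with h | h
  · simp [descFactorial_eq_zero_iff_lt.2 h]
  · rw [descFactorial_succ, ← add_mul, Nat.sub_add_cancel h]

theorem sum_stirlingSecond_mul_descFactorial (m x : ℕ) :
    ∑ k ∈ range (m + 1), stirlingSecond m k * x.descFactorial k = x ^ m := by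
  induction m with
  | zero => simp
  | succ m ih =>
    have shift : ∑ k ∈ range (m + 1), (k + 1) * stirlingSecond m (k + 1) * x.descFactorial (k + 1)
        = ∑ k ∈ range (m + 1), k * stirlingSecond m k * x.descFactorial k := by
      rw [sum_range_succ' (fun k => k * stirlingSecond m k * x.descFactorial k),
        sum_range_succ, stirlingSecond_eq_zero_of_lt m.lt_succ_self]
      simp
    calc ∑ k ∈ range (m + 2), stirlingSecond (m + 1) k * x.descFactorial k
        = ∑ k ∈ range (m + 1), (k + 1) * stirlingSecond m (k + 1) * x.descFactorial (k + 1)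
          + ∑ k ∈ range (m + 1), stirlingSecond m k * x.descFactorial (k + 1) := by
          simp only [sum_range_succ' _ (m + 1), stirlingSecond_succ_succ, add_mul,
            sum_add_distrib, stirlingSecond_succ_zero, zero_mul, add_zero]
      _ = ∑ k ∈ range (m + 1), stirlingSecond m k * (x * x.descFactorial k) := by
          rw [shift, ← sum_add_distrib]
          refine sum_congr rfl fun k _ => ?_
          rw [mul_descFactorial_eq_descFactorial_succ_add]
          ring
      _ = x ^ (m + 1) := by
          simp only [pow_succ, ← ih, sum_mul]
          exact sum_congr rfl fun k _ => by ring

theorem sum_stirlingSecond_mul_descFactorial_succ (m x : ℕ) :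
    ∑ k ∈ range (m + 1), stirlingSecond m k * x.descFactorial (k + 1) = x * (x - 1) ^ m := by
  cases x with
  | zero => simp
  | succ y =>
    simp only [succ_descFactorial_succ, add_tsub_cancel_right,
      ← sum_stirlingSecond_mul_descFactorial, mul_sum]
    exact sum_congr rfl fun k _ => by ring

theorem sum_range_stirlingSecond_mul_of_lt {m N : ℕ} (h : m < N) (f : ℕ → ℕ) :
    ∑ k ∈ range N, stirlingSecond m k * f k = ∑ k ∈ range (m + 1), stirlingSecond m k * f k := by
  refine (sum_subset (range_subset_range.2 h) fun k _ hk => ?_).symm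
  rw [stirlingSecond_eq_zero_of_lt (by simpa using hk), zero_mul]

end Nat

theorem bell_eq_sum_range {m N : ℕ} (h : m < N) :
    bell m = ∑ k ∈ range N, Nat.stirlingSecond m k := by
  simpa [bell, stirling2_eq_stirlingSecond] using
    (Nat.sum_range_stirlingSecond_mul_of_lt h fun _ => 1).symm

theorem eq_zero_of_forall_sum_mul_descFactorial_eq_zero {N : ℕ} {c : ℕ → ℤ}
    (h : ∀ x : ℕ, ∑ k ∈ range N, c k * x.descFactorial k = 0) {j : ℕ} (hj : j < N) : c j = 0 := by
  induction j using Nat.strong_induction_on with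
  | _ j ih =>
    -- at `x = j` the terms with `k > j` vanish, and those with `k < j` by induction
    have hsingle : ∑ k ∈ range N, c k * j.descFactorial k = c j * j.factorial := by
      rw [sum_eq_single_of_mem j (mem_range.2 hj), Nat.descFactorial_self]
      intro k _ hkj
      rcases hkj.lt_or_gt with hlt | hgt
      · rw [ih k hlt (hlt.trans hj), zero_mul]
      · rw [Nat.descFactorial_eq_zero_iff_lt.2 hgt, Nat.cast_zero, mul_zero]
    have hj0 := h j
    rw [hsingle] at hj0
    exact (mul_eq_zero.1 hj0).resolve_right (by exact_mod_cast j.factorial_ne_zero)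

theorem eq_of_forall_sum_mul_descFactorial_succ_eq {N : ℕ} {c d : ℕ → ℤ}
    (h : ∀ x : ℕ, ∑ k ∈ range N, c k * x.descFactorial (k + 1)
      = ∑ k ∈ range N, d k * x.descFactorial (k + 1)) {j : ℕ} (hj : j < N) : c j = d j := by
  refine sub_eq_zero.1
    (eq_zero_of_forall_sum_mul_descFactorial_eq_zero (c := c - d) (fun x => ?_) hj)
  have hx := h (x + 1)
  simp only [Nat.succ_descFactorial_succ, Nat.cast_mul] at hx
  have hfactor : ((x : ℤ) + 1) * ∑ k ∈ range N, (c - d) k * x.descFactorial k = 0 := by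
    simp only [Pi.sub_apply, sub_mul, sum_sub_distrib, mul_sub, mul_sum]
    rw [sub_eq_zero]
    convert hx using 2 <;> push_cast <;> ring
  exact (mul_eq_zero.1 hfactor).resolve_left (by positivity)

namespace Finpartition

variable {V α : Type*} [Fintype V] [DecidableEq V]

theorem ext_part {P Q : Finpartition (univ : Finset V)} (h : ∀ a, P.part a = Q.part a) :
    P = Q := by
  have key : ∀ {P Q : Finpartition (univ : Finset V)}, (∀ a, P.part a = Q.part a) →
      ∀ p ∈ P.parts, p ∈ Q.parts := by
    intro P Q h p hp
    obtain ⟨a, ha⟩ := P.nonempty_of_mem_parts hp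
    rw [← P.part_eq_of_mem hp ha, h]
    exact Q.part_mem.2 (mem_univ a)
  ext p
  exact ⟨key h p, key (fun a => (h a).symm) p⟩

def partOf (P : Finpartition (univ : Finset V)) (v : V) : P.parts :=
  ⟨P.part v, P.part_mem.2 (mem_univ v)⟩

theorem partOf_eq_partOf_iff {P : Finpartition (univ : Finset V)} {a b : V} :
    P.partOf a = P.partOf b ↔ b ∈ P.part a := by
  rw [partOf, partOf, Subtype.mk.injEq, eq_comm,
    P.mem_part_iff_part_eq_part (mem_univ _) (mem_univ _)]

theorem partOf_surjective (P : Finpartition (univ : Finset V)) :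
    Function.Surjective P.partOf := by
  rintro ⟨p, hp⟩
  obtain ⟨a, ha⟩ := P.nonempty_of_mem_parts hp
  exact ⟨a, Subtype.ext (P.part_eq_of_mem hp ha)⟩

noncomputable def ofFibers (f : V → α) : Finpartition (univ : Finset V) :=
  open Classical in ofSetoid (Setoid.ker f)

theorem mem_part_ofFibers_iff {f : V → α} {a b : V} :
    b ∈ (ofFibers f).part a ↔ f a = f b := by
  classical
  exact mem_part_ofSetoid_iff_rel

theorem ofFibers_eq_iff {f : V → α} {P : Finpartition (univ : Finset V)} :
    ofFibers f = P ↔ ∀ a b, f a = f b ↔ P.partOf a = P.partOf b := by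
  constructor
  · rintro rfl a b
    rw [partOf_eq_partOf_iff, mem_part_ofFibers_iff]
  · refine fun h => ext_part fun a => ?_
    ext b
    rw [mem_part_ofFibers_iff, h, partOf_eq_partOf_iff]

theorem eq_of_mem_ofFibers {f : V → α} {p : Finset V} (hp : p ∈ (ofFibers f).parts) {u v : V}
    (hu : u ∈ p) (hv : v ∈ p) : f u = f v := by
  rw [← (ofFibers f).part_eq_of_mem hp hu] at hv
  exact mem_part_ofFibers_iff.1 hv

noncomputable def embeddingEquivOfFibersEq (P : Finpartition (univ : Finset V)) :
    (P.parts ↪ α) ≃ {f : V → α // ofFibers f = P} :=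
  Equiv.ofBijective
    (fun g => ⟨g ∘ P.partOf, ofFibers_eq_iff.2 fun _ _ => g.injective.eq_iff⟩)
    (by
      constructor
      · intro g g' h
        ext p
        obtain ⟨a, rfl⟩ := P.partOf_surjective p
        exact congrFun (congrArg Subtype.val h) a
      · rintro ⟨f, hf⟩
        have hf := ofFibers_eq_iff.1 hf
        choose rep hrep using P.partOf_surjective
        refine ⟨⟨f ∘ rep, fun p q h => ?_⟩, Subtype.ext (funext fun a => ?_)⟩
        · rwa [Function.comp_apply, Function.comp_apply, hf, hrep, hrep] at h
        · exact (hf _ _).2 (hrep _))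

def IsIndependent (G : SimpleGraph V) (P : Finpartition (univ : Finset V)) : Prop :=
  ∀ p ∈ P.parts, ∀ u ∈ p, ∀ v ∈ p, ¬ G.Adj u v

theorem isIndependent_ofFibers_iff {G : SimpleGraph V} {f : V → α} :
    (ofFibers f).IsIndependent G ↔ ∀ u v, G.Adj u v → f u ≠ f v := by
  constructor
  · intro h u v hadj huv
    exact h _ ((ofFibers f).part_mem.2 (mem_univ u)) u ((ofFibers f).mem_part (mem_univ u)) v
      (mem_part_ofFibers_iff.2 huv) hadj
  · intro h p hp u hu v hv hadj
    exact h u v hadj (eq_of_mem_ofFibers hp hu hv)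

end Finpartition

section GraphStirling

open Finpartition

variable {V : Type} [Fintype V] [DecidableEq V] (G : SimpleGraph V)

theorem graphStirling_eq_card (k : ℕ) [DecidablePred (IsIndependent G)] :
    graphStirling G k
      = #{P : Finpartition (univ : Finset V) | P.IsIndependent G ∧ #P.parts = k} := by
  classical
  rw [graphStirling, Nat.card_eq_fintype_card, Fintype.card_subtype]
  congr 1
  ext P
  simp only [mem_filter, IsIndependent, and_comm]

theorem graphStirling_zero [Nonempty V] : graphStirling G 0 = 0 := by
  rw [graphStirling, Nat.card_eq_zero]
  refine Or.inl ⟨fun ⟨P, hP, _⟩ => ?_⟩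
  exact univ_nonempty.ne_empty (Finpartition.parts_eq_empty_iff.1 (card_eq_zero.1 hP))

theorem card_properColorings_eq_sum_graphStirling (α : Type*) [Fintype α] :
    Nat.card {f : V → α // ∀ u v, G.Adj u v → f u ≠ f v}
      = ∑ k ∈ range (Fintype.card V + 1),
          graphStirling G k * (Fintype.card α).descFactorial k := by
  classical
  have hfiber : ∀ P : Finpartition (univ : Finset V),
      #{f : V → α | ofFibers f = P} = (Fintype.card α).descFactorial #P.parts := by
    intro P
    rw [← Fintype.card_subtype, ← Fintype.card_congr (embeddingEquivOfFibersEq P),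
      Fintype.card_embedding_eq, Fintype.card_coe]
  have hcard : ∀ P : Finpartition (univ : Finset V), #P.parts ∈ range (Fintype.card V + 1) :=
    fun P => mem_range_succ_iff.2 (card_univ (α := V) ▸ P.card_parts_le_card)
  calc Nat.card {f : V → α // ∀ u v, G.Adj u v → f u ≠ f v}
      = #{f : V → α | (ofFibers f).IsIndependent G} := by
        simp only [Nat.card_eq_fintype_card, Fintype.card_subtype, isIndependent_ofFibers_iff]
    _ = ∑ P ∈ {P : Finpartition univ | P.IsIndependent G}, #{f : V → α | ofFibers f = P} := by
        rw [card_eq_sum_card_fiberwise (f := ofFibers) (t := {P | P.IsIndependent G})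
          fun f hf => by simpa using hf]
        refine sum_congr rfl fun P hP => ?_
        rw [filter_filter]
        refine congrArg card (filter_congr fun f _ => ?_)
        exact and_iff_right_of_imp fun h => h ▸ (mem_filter.1 hP).2
    _ = ∑ k ∈ range (Fintype.card V + 1),
          ∑ P ∈ {P : Finpartition univ | P.IsIndependent G} with #P.parts = k,
            (Fintype.card α).descFactorial #P.parts := by
        rw [sum_fiberwise_of_maps_to fun P _ => hcard P]
        exact sum_congr rfl fun P _ => hfiber P
    _ = _ := by
        refine sum_congr rfl fun k _ => ?_
        rw [sum_const_nat fun P hP => by rw [(mem_filter.1 hP).2], graphStirling_eq_card,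
          filter_filter]

end GraphStirling

section Cycle

variable {α : Type*}

def ConsecutiveDistinct {n : ℕ} (f : Fin (n + 1) → α) : Prop :=
  ∀ i : Fin n, f i.castSucc ≠ f i.succ

def CyclicallyDistinct {n : ℕ} (f : Fin (n + 2) → α) : Prop :=
  ConsecutiveDistinct f ∧ f (Fin.last (n + 1)) ≠ f 0

theorem consecutiveDistinct_snoc {n : ℕ} {g : Fin (n + 1) → α} {c : α} :
    ConsecutiveDistinct (Fin.snoc g c : Fin (n + 2) → α)
      ↔ ConsecutiveDistinct g ∧ g (Fin.last n) ≠ c := by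
  constructor
  · intro h
    refine ⟨fun i => ?_, ?_⟩
    · simpa only [Fin.succ_castSucc, Fin.snoc_castSucc] using h i.castSucc
    · simpa only [Fin.succ_last, Fin.snoc_last, Fin.snoc_castSucc] using h (Fin.last n)
  · rintro ⟨hg, hc⟩ i
    induction i using Fin.lastCases with
    | last => simpa only [Fin.succ_last, Fin.snoc_last, Fin.snoc_castSucc] using hc
    | cast j => simpa only [Fin.succ_castSucc, Fin.snoc_castSucc] using hg j

theorem card_consecutiveDistinct [Fintype α] (n : ℕ) :
    Nat.card {f : Fin (n + 1) → α // ConsecutiveDistinct f}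
      = Fintype.card α * (Fintype.card α - 1) ^ n := by
  classical
  induction n with
  | zero =>
    rw [Nat.card_congr (Equiv.subtypeUnivEquiv (p := ConsecutiveDistinct) fun _ i => i.elim0)]
    simp
  | succ n ih =>
    let e : {f : Fin (n + 2) → α // ConsecutiveDistinct f}
        ≃ Σ g : {g : Fin (n + 1) → α // ConsecutiveDistinct g}, {c : α // g.1 (Fin.last n) ≠ c} :=
      { toFun f :=
          have hf := consecutiveDistinct_snoc.1 ((Fin.snoc_init_self f.1).symm ▸ f.2)
          ⟨⟨Fin.init f.1, hf.1⟩, ⟨f.1 (Fin.last _), hf.2⟩⟩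
        invFun p := ⟨Fin.snoc p.1.1 p.2.1, consecutiveDistinct_snoc.2 ⟨p.1.2, p.2.2⟩⟩
        left_inv f := Subtype.ext (Fin.snoc_init_self f.1)
        right_inv p := Sigma.subtype_ext (Subtype.ext (Fin.init_snoc (α := fun _ => α) _ _))
          (Fin.snoc_last (α := fun _ => α) _ _) }
    have hfiber : ∀ g : Fin (n + 1) → α,
        Nat.card {c : α // g (Fin.last n) ≠ c} = Fintype.card α - 1 := fun g => by
      rw [Nat.card_eq_fintype_card, Fintype.card_subtype_compl, Fintype.card_subtype_eq']
    rw [Nat.card_congr e, Nat.card_sigma, sum_congr rfl fun g _ => hfiber g.1, sum_const,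
      card_univ, ← Nat.card_eq_fintype_card, ih, smul_eq_mul, pow_succ, mul_assoc]

theorem properColoring_cycleGraph_iff {n : ℕ} {f : Fin (n + 2) → α} :
    (∀ u v, (cycleGraph (n + 2)).Adj u v → f u ≠ f v) ↔ CyclicallyDistinct f := by
  have hsucc : (∀ u v, (cycleGraph (n + 2)).Adj u v → f u ≠ f v) ↔ ∀ v, f v ≠ f (v + 1) := by
    constructor
    · intro h v
      exact h v (v + 1) (cycleGraph_adj.2 (Or.inr (add_sub_cancel_left v 1)))
    · intro h u v hadj
      rcases cycleGraph_adj.1 hadj with huv | hvu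
      · obtain rfl := sub_eq_iff_eq_add'.1 huv
        exact (h v).symm
      · obtain rfl := sub_eq_iff_eq_add'.1 hvu
        exact h u
  rw [hsucc, Fin.forall_fin_succ', CyclicallyDistinct, ConsecutiveDistinct]
  simp only [Fin.coeSucc_eq_succ, Fin.last_add_one]

/-- A colouring of the path on `n + 3` vertices with distinct neighbours either also colours the
closing edge properly, or has equal end colours and drops its last vertex to a proper colouring
of the shorter cycle. -/
theorem card_cyclicallyDistinct_add_card_cyclicallyDistinct [Fintype α] (n : ℕ) :
    Nat.card {f : Fin (n + 3) → α // CyclicallyDistinct f}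
      + Nat.card {g : Fin (n + 2) → α // CyclicallyDistinct g}
      = Nat.card {f : Fin (n + 3) → α // ConsecutiveDistinct f} := by
  classical
  let e : {g : Fin (n + 2) → α // CyclicallyDistinct g}
      ≃ {f : Fin (n + 3) → α // ConsecutiveDistinct f ∧ f (Fin.last (n + 2)) = f 0} :=
    { toFun g := ⟨Fin.snoc g.1 (g.1 0), consecutiveDistinct_snoc.2 g.2, by simp⟩
      invFun f := ⟨Fin.init f.1, by
        have h := consecutiveDistinct_snoc.1 ((Fin.snoc_init_self f.1).symm ▸ f.2.1)
        rw [f.2.2] at h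
        simpa [CyclicallyDistinct, Fin.init] using h⟩
      left_inv g := Subtype.ext (Fin.init_snoc (α := fun _ => α) _ _)
      right_inv f := Subtype.ext (by
        conv_rhs => rw [← Fin.snoc_init_self f.1, f.2.2]
        simp [Fin.init]) }
  rw [Nat.card_congr e, add_comm]
  simp only [Nat.card_eq_fintype_card, Fintype.card_subtype, CyclicallyDistinct,
    ← filter_filter, ne_eq]
  exact card_filter_add_card_filter_not _

/-- The alternating sum telescopes to the chromatic polynomial `(x-1)^(n+2) + (-1)^n (x-1)` of
the cycle on `n + 2` vertices. -/
theorem card_cyclicallyDistinct [Fintype α] (n : ℕ) :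
    (Nat.card {f : Fin (n + 2) → α // CyclicallyDistinct f} : ℤ)
      = ∑ i ∈ range (n + 1),
          (-1) ^ i * ((Fintype.card α * (Fintype.card α - 1) ^ (n + 1 - i) : ℕ) : ℤ) := by
  induction n with
  | zero =>
    have h : ∀ f : Fin 2 → α, CyclicallyDistinct f ↔ ConsecutiveDistinct f :=
      fun f => and_iff_left_of_imp fun h => (h 0).symm
    rw [Nat.card_congr (Equiv.subtypeEquivRight h), card_consecutiveDistinct]
    simp
  | succ n ih =>
    have hsplit := card_cyclicallyDistinct_add_card_cyclicallyDistinct (α := α) n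
    rw [card_consecutiveDistinct] at hsplit
    have hsum : ∑ i ∈ range (n + 1), (-1 : ℤ) ^ (i + 1)
          * ((Fintype.card α * (Fintype.card α - 1) ^ (n + 1 + 1 - (i + 1)) : ℕ) : ℤ)
        = -∑ i ∈ range (n + 1),
            (-1) ^ i * ((Fintype.card α * (Fintype.card α - 1) ^ (n + 1 - i) : ℕ) : ℤ) := by
      simp only [pow_succ, mul_neg_one, neg_mul, sum_neg_distrib, Nat.add_sub_add_right]
    rw [sum_range_succ', hsum, ← ih, pow_zero, one_mul, Nat.sub_zero, eq_neg_add_iff_add_eq,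
      add_comm]
    exact_mod_cast hsplit

theorem card_properColorings_cycleGraph [Fintype α] (n : ℕ) :
    (Nat.card {f : Fin (n + 2) → α // ∀ u v, (cycleGraph (n + 2)).Adj u v → f u ≠ f v} : ℤ)
      = ∑ i ∈ range (n + 1),
          (-1) ^ i * ((Fintype.card α * (Fintype.card α - 1) ^ (n + 1 - i) : ℕ) : ℤ) := by
  rw [Nat.card_congr (Equiv.subtypeEquivRight fun _ => properColoring_cycleGraph_iff)]
  exact card_cyclicallyDistinct n

end Cycle

theorem graphStirling_cycleGraph_succ (m : ℕ) {k : ℕ} (hk : k < m + 2) :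
    (graphStirling (cycleGraph (m + 2)) (k + 1) : ℤ)
      = ∑ i ∈ range (m + 1), (-1) ^ i * (Nat.stirlingSecond (m + 1 - i) k : ℤ) := by
  refine eq_of_forall_sum_mul_descFactorial_succ_eq
    (c := fun k => (graphStirling (cycleGraph (m + 2)) (k + 1) : ℤ))
    (d := fun k => ∑ i ∈ range (m + 1), (-1) ^ i * (Nat.stirlingSecond (m + 1 - i) k : ℤ))
    (fun x => ?_) hk
  have hcount := card_properColorings_eq_sum_graphStirling (cycleGraph (m + 2)) (Fin x)
  rw [Fintype.card_fin, Fintype.card_fin, sum_range_succ', graphStirling_zero, zero_mul,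
    add_zero] at hcount
  have hcycle := card_properColorings_cycleGraph (α := Fin x) m
  rw [Fintype.card_fin] at hcycle
  calc ∑ k ∈ range (m + 2),
        (graphStirling (cycleGraph (m + 2)) (k + 1) : ℤ) * x.descFactorial (k + 1)
      = ∑ i ∈ range (m + 1), (-1) ^ i * ((x * (x - 1) ^ (m + 1 - i) : ℕ) : ℤ) := by
        rw [← hcycle, hcount]
        push_cast
        rfl
    _ = ∑ i ∈ range (m + 1), ∑ k ∈ range (m + 2),
          (-1) ^ i * (Nat.stirlingSecond (m + 1 - i) k : ℤ) * x.descFactorial (k + 1) := by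
        refine sum_congr rfl fun i _ => ?_
        rw [← Nat.sum_stirlingSecond_mul_descFactorial_succ,
          ← Nat.sum_range_stirlingSecond_mul_of_lt (N := m + 2) (by omega)]
        push_cast
        rw [mul_sum]
        exact sum_congr rfl fun k _ => by ring
    _ = _ := by
        rw [sum_comm]
        exact sum_congr rfl fun k _ => by rw [sum_mul]

theorem cycle_bell_number (n : ℕ) (hn : 3 ≤ n) :
    ((∑ k ∈ Finset.range (n + 1), graphStirling (SimpleGraph.cycleGraph n) k : ℕ) : ℤ) =
      ∑ i ∈ Finset.range (n - 1), (-1 : ℤ) ^ i * (bell (n - 1 - i) : ℤ) := by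
  obtain ⟨m, rfl⟩ : ∃ m, n = m + 2 := ⟨n - 2, by omega⟩
  rw [Nat.cast_sum, sum_range_succ', graphStirling_zero, Nat.cast_zero, add_zero,
    sum_congr rfl fun k hk => graphStirling_cycleGraph_succ m (mem_range.1 hk), sum_comm]
  refine sum_congr rfl fun i _ => ?_
  rw [← mul_sum, bell_eq_sum_range (N := m + 2) (by omega)]
  push_cast
  rfl
end

section
/- If P(x) = Σ_{k=2}^{n} a_k x^k with n ≥ 3, a_k > 0 for 3 ≤ k ≤ n, a_2 ≥ 0, and the coefficient sequence is ultra log-concave (i.e., (a_k/C(n,k))^2 ≥ (a_{k-1}/C(n,k-1))(a_{k+1}/C(n,k+1)) for all k), then Q(x) = x(x + xD)(P(x)/x) has coefficient sequence that is ultra log-concave with respect to n+1, with strict inequalities at all indices k ≥ 3 (and also k = 2 if a_2 > 0). -/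
open Finset SimpleGraph Polynomial

/-!
Write `c k = a k / C(n, k)`. Since `C(n, k - 1) / C(n + 1, k) = k / (n + 1)` and
`C(n, k) / C(n + 1, k) = (n + 1 - k) / (n + 1)`, the normalized coefficients of `Q` are
`b k / C(n + 1, k) = (k c (k - 1) + (k - 1) (n + 1 - k) c k) / (n + 1)`. For three consecutive
ones, the square of the middle minus the product of the outer two is a nonnegative combination of
the log-concavity defects `c (k-1)² - c (k-2) c k`, `c k² - c (k-1) c (k+1)` and of their
consequence `c (k-1) c k - c (k-2) c (k+1)`, plus a term that is positive as soon as `c k > 0`.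
-/

theorem mul_le_mul_of_sq_ge_mul {w x y z : ℝ} (hw : 0 ≤ w) (hx : 0 ≤ x) (hy : 0 < y)
    (hz : 0 ≤ z) (hwy : w * y ≤ x ^ 2) (hxz : x * z ≤ y ^ 2) : w * z ≤ x * y := by
  rcases hx.eq_or_lt with rfl | hx
  · have hw : w = 0 := by nlinarith
    simp [hw]
  · have hxy : 0 < x * y := mul_pos hx hy
    refine le_of_mul_le_mul_right ?_ hxy
    nlinarith [mul_le_mul hwy hxz (mul_nonneg hx.le hz) (sq_nonneg x)]

theorem mul_lt_sq_of_sq_ge_mul {K p w x y z : ℝ} (hK : 2 ≤ K) (hp : 1 ≤ p)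
    (hw : 0 ≤ w) (hx : 0 ≤ x) (hy : 0 < y) (hz : 0 ≤ z)
    (hwy : w * y ≤ x ^ 2) (hxz : x * z ≤ y ^ 2) :
    ((K - 1) * w + (K - 2) * (p + 1) * x) * ((K + 1) * y + K * (p - 1) * z) <
      (K * x + (K - 1) * p * y) ^ 2 := by
  have hwz := mul_le_mul_of_sq_ge_mul hw hx hy hz hwy hxz
  have h₁ : 0 ≤ (K ^ 2 - 1) * (x ^ 2 - w * y) :=
    mul_nonneg (by nlinarith) (by linarith)
  have h₂ : 0 ≤ K * (K - 1) * (p - 1) * (x * y - w * z) :=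
    mul_nonneg (mul_nonneg (mul_nonneg (by linarith) (by linarith)) (by linarith)) (by linarith)
  have h₃ : 0 ≤ K * (K - 2) * (p ^ 2 - 1) * (y ^ 2 - x * z) :=
    mul_nonneg (mul_nonneg (mul_nonneg (by linarith) (by linarith)) (by nlinarith)) (by linarith)
  have h₄ : 0 < x ^ 2 + 2 * (p + 1) * (x * y) + (p ^ 2 + K * (K - 2)) * y ^ 2 := by
    have : 0 ≤ (p + 1) * (x * y) := mul_nonneg (by linarith) (mul_nonneg hx hy.le)
    have : 0 ≤ K * (K - 2) * y ^ 2 :=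
      mul_nonneg (mul_nonneg (by linarith) (by linarith)) (sq_nonneg y)
    have : 0 < p ^ 2 * y ^ 2 := by positivity
    linarith [sq_nonneg x]
  -- the square minus the product is `h₁ + h₂ + h₃ + h₄`
  linarith

def ulcTransform (n : ℕ) (c : ℕ → ℝ) (j : ℕ) : ℝ :=
  (j + 1) * c j + j * (n - j) * c (j + 1)

theorem ulcTransform_mul_lt_sq {n j : ℕ} {c : ℕ → ℝ} (hjn : j + 2 ≤ n) (hc : ∀ i, 0 ≤ c i)
    (hpos : 0 < c (j + 2)) (hlc : ∀ i, c i * c (i + 2) ≤ c (i + 1) ^ 2) :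
    ulcTransform n c j * ulcTransform n c (j + 2) < ulcTransform n c (j + 1) ^ 2 := by
  have hjn' : (j : ℝ) + 2 ≤ n := by exact_mod_cast hjn
  have key := mul_lt_sq_of_sq_ge_mul (K := j + 2) (p := n - j - 1) (by linarith) (by linarith)
    (hc j) (hc (j + 1)) hpos (hc (j + 3)) (hlc j) (hlc (j + 1))
  simp only [ulcTransform]
  push_cast
  linarith

theorem div_choose_succ_succ (n k : ℕ) (x : ℝ) :
    x / (n + 1).choose (k + 1) = (k + 1) / (n + 1) * (x / n.choose k) := by
  rcases le_or_gt k n with hk | hk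
  · have h : ((n + 1).choose (k + 1) : ℝ) * (k + 1) = (n + 1) * n.choose k := by
      exact_mod_cast (Nat.add_one_mul_choose_eq n k).symm
    have : (0 : ℝ) < n.choose k := by exact_mod_cast Nat.choose_pos hk
    have : (0 : ℝ) < (n + 1).choose (k + 1) := by exact_mod_cast Nat.choose_pos (by omega)
    field_simp
    linear_combination (-x) * h
  · simp [Nat.choose_eq_zero_of_lt hk, Nat.choose_eq_zero_of_lt (Nat.succ_lt_succ hk)]

theorem div_choose_succ {n k : ℕ} (hk : k ≤ n) (x : ℝ) :
    x / (n + 1).choose k = (n + 1 - k) / (n + 1) * (x / n.choose k) := by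
  have h : (n.choose k : ℝ) * (n + 1) = (n + 1).choose k * (n + 1 - k) := by
    have := congrArg (Nat.cast : ℕ → ℝ) (Nat.choose_mul_succ_eq n k)
    push_cast [Nat.sub_add_comm hk, Nat.cast_sub hk] at this
    linear_combination this
  have : (0 : ℝ) < n.choose k := by exact_mod_cast Nat.choose_pos hk
  have : (0 : ℝ) < (n + 1).choose k := by exact_mod_cast Nat.choose_pos (by omega)
  have : (0 : ℝ) < n + 1 - k := by
    have : (k : ℝ) ≤ n := by exact_mod_cast hk
    linarith
  field_simp
  linear_combination x * h

theorem div_choose_eq_ulcTransform {n j : ℕ} {a b : ℕ → ℝ}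
    (hb : ∀ i, b (i + 1) = a i + i * a (i + 1)) (ha : a (n + 1) = 0) (hj : j ≤ n) :
    b (j + 1) / (n + 1).choose (j + 1) =
      ulcTransform n (fun k ↦ a k / n.choose k) j / (n + 1) := by
  have hlast : a (j + 1) / (n + 1).choose (j + 1) =
      (n - j) / (n + 1) * (a (j + 1) / n.choose (j + 1)) := by
    rcases hj.lt_or_eq with hj | rfl
    · rw [div_choose_succ hj]
      push_cast
      ring
    · simp [ha]
  rw [hb, add_div, mul_div_assoc, hlast, div_choose_succ_succ, ulcTransform]
  ring

theorem div_choose_mul_le_sq {n : ℕ} {a : ℕ → ℝ}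
    (hulc : ∀ k, 1 ≤ k → k ≤ n - 1 →
      (a k / (Nat.choose n k : ℝ)) ^ 2 ≥
        (a (k - 1) / (Nat.choose n (k - 1) : ℝ)) * (a (k + 1) / (Nat.choose n (k + 1) : ℝ)))
    (i : ℕ) :
    a i / n.choose i * (a (i + 2) / n.choose (i + 2)) ≤ (a (i + 1) / n.choose (i + 1)) ^ 2 := by
  rcases le_or_gt (i + 2) n with hi | hi
  · simpa using hulc (i + 1) (by omega) (by omega)
  · simp [Nat.choose_eq_zero_of_lt hi, sq_nonneg]

theorem coeff_succ_eq {n : ℕ} {a b : ℕ → ℝ} (ha0 : ∀ k, k < 2 ∨ n < k → a k = 0)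
    (hb : ∀ k, b k =
      if k = 2 then a 2
      else if 3 ≤ k ∧ k ≤ n then a (k - 1) + (k - 1 : ℝ) * a k
      else if k = n + 1 then a n
      else 0)
    (j : ℕ) : b (j + 1) = a j + j * a (j + 1) := by
  have h1 := ha0 1 (by omega)
  have hlast := ha0 (n + 1) (by omega)
  rw [hb]
  split_ifs
  · obtain rfl : j = 1 := by omega
    simp [h1]
  · simp
  · obtain rfl : j = n := by omega
    simp [hlast]
  · rcases Nat.lt_or_ge j 1 with hj | hj
    · obtain rfl : j = 0 := by omega
      simp [ha0 0 (by omega)]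
    · simp [ha0 j (by omega), ha0 (j + 1) (by omega)]

theorem coeff_div_choose_mul_lt_sq {n j : ℕ} {a b : ℕ → ℝ} (hjn : j + 2 ≤ n)
    (ha : ∀ k, 0 ≤ a k) (hpos : 0 < a (j + 2)) (hlast : a (n + 1) = 0)
    (hlc : ∀ i, a i / n.choose i * (a (i + 2) / n.choose (i + 2)) ≤
      (a (i + 1) / n.choose (i + 1)) ^ 2)
    (hb : ∀ i, b (i + 1) = a i + i * a (i + 1)) :
    b (j + 1) / (n + 1).choose (j + 1) * (b (j + 3) / (n + 1).choose (j + 3)) <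
      (b (j + 2) / (n + 1).choose (j + 2)) ^ 2 := by
  rw [div_choose_eq_ulcTransform hb hlast (j := j) (by omega),
    div_choose_eq_ulcTransform hb hlast (j := j + 1) (by omega),
    div_choose_eq_ulcTransform hb hlast (j := j + 2) hjn, div_mul_div_comm, div_pow, ← sq,
    div_lt_div_iff_of_pos_right (by positivity)]
  exact ulcTransform_mul_lt_sq hjn (fun i ↦ div_nonneg (ha i) (Nat.cast_nonneg _))
    (div_pos hpos (by exact_mod_cast Nat.choose_pos hjn)) hlc

theorem operator_preserves_ultra_log_concave (n : ℕ) (hn : 3 ≤ n) (a : ℕ → ℝ)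
    (ha0 : ∀ k, k < 2 ∨ n < k → a k = 0)
    (hapos : ∀ k, 3 ≤ k → k ≤ n → 0 < a k) (ha2 : 0 ≤ a 2)
    (hulc : ∀ k, 1 ≤ k → k ≤ n - 1 →
      (a k / (Nat.choose n k : ℝ)) ^ 2 ≥
        (a (k - 1) / (Nat.choose n (k - 1) : ℝ)) * (a (k + 1) / (Nat.choose n (k + 1) : ℝ)))
    (b : ℕ → ℝ)
    (hb : ∀ k, b k =
      if k = 2 then a 2
      else if 3 ≤ k ∧ k ≤ n then a (k - 1) + (k - 1 : ℝ) * a k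
      else if k = n + 1 then a n
      else 0) :
    (∀ k, 1 ≤ k → k ≤ n →
      (b k / (Nat.choose (n + 1) k : ℝ)) ^ 2 ≥
        (b (k - 1) / (Nat.choose (n + 1) (k - 1) : ℝ)) *
          (b (k + 1) / (Nat.choose (n + 1) (k + 1) : ℝ)))
    ∧ (∀ k, 3 ≤ k → k ≤ n →
      (b k / (Nat.choose (n + 1) k : ℝ)) ^ 2 >
        (b (k - 1) / (Nat.choose (n + 1) (k - 1) : ℝ)) *
          (b (k + 1) / (Nat.choose (n + 1) (k + 1) : ℝ)))
    ∧ (0 < a 2 →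
      (b 2 / (Nat.choose (n + 1) 2 : ℝ)) ^ 2 >
        (b 1 / (Nat.choose (n + 1) 1 : ℝ)) * (b 3 / (Nat.choose (n + 1) 3 : ℝ))) := by
  have ha : ∀ k, 0 ≤ a k := fun k ↦ by
    by_cases hk : k < 2 ∨ n < k
    · exact (ha0 k hk).ge
    · rcases (show k = 2 ∨ 3 ≤ k by omega) with rfl | hk3
      exacts [ha2, (hapos k hk3 (by omega)).le]
  have hstrict : ∀ j, j + 2 ≤ n → 0 < a (j + 2) → _ := fun j hj hpos ↦
    coeff_div_choose_mul_lt_sq hj ha hpos (ha0 _ (by omega)) (div_choose_mul_le_sq hulc)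
      (coeff_succ_eq ha0 hb)
  have hmid : ∀ k, 3 ≤ k → k ≤ n →
      b (k - 1) / (n + 1).choose (k - 1) * (b (k + 1) / (n + 1).choose (k + 1)) <
        (b k / (n + 1).choose k) ^ 2 := fun k hk3 hkn ↦ by
    obtain ⟨j, rfl⟩ : ∃ j, k = j + 2 := ⟨k - 2, by omega⟩
    simpa using hstrict j hkn (hapos _ hk3 hkn)
  have hb0 : b 0 = 0 := by simp [hb]
  have hb1 : b 1 = 0 := by simpa [ha0 0 (by omega)] using coeff_succ_eq ha0 hb 0
  refine ⟨fun k hk1 hkn ↦ ?_, hmid, fun h2 ↦ by simpa [hb1] using hstrict 0 (by omega) h2⟩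
  rcases (show k = 1 ∨ k = 2 ∨ 3 ≤ k by omega) with rfl | rfl | hk3
  · simp [hb0, sq_nonneg]
  · simp [hb1, sq_nonneg]
  · exact (hmid k hk3 hkn).le
end
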